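/- Let A = a₀ + 𝐚 + 𝒜 + a₁₂₃I be a multivector in Cl(2,1) with a₊⁽²⁾ > 0 and a₋⁽²⁾ > 0, and set a₊ = √(a₊⁽²⁾), a₋ = √(a₋⁽²⁾), f₊ = (a₀ + a₁₂₃)² + a₊⁽²⁾ and f₋ = (a₀ - a₁₂₃)² + a₋⁽²⁾. For any integers c₁₊, c₁₋ define A₀₊ = (1/2)·log f₊, A₀₋ = (1/2)·log f₋, A₁₂₊ = ((atan2(a₊, a₀ + a₁₂₃) + 2πc₁₊)/a₊)·(1 + I)·(𝐚 + 𝒜), A₁₂₋ = ((atan2(a₋, a₀ - a₁₂₃) + 2πc₁₋)/a₋)·(1 - I)·(𝐚 + 𝒜), and L = (1/2)·(A₀₊ + A₀₋ + A₁₂₊ + A₁₂₋ + (A₀₊ - A₀₋)·I). Then exp L = A. -/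

import Mathlib

open Real CliffordAlgebra

noncomputable section

/-- The quadratic form of signature (2,1): `Q(x) = x₁² + x₂² - x₃²`. -/
def Q21 : QuadraticForm ℝ (Fin 3 → ℝ) := QuadraticMap.weightedSumSquares ℝ ![1, 1, -1]

/-- The real Clifford algebra Cl(2,1). -/
abbrev Cl21 := CliffordAlgebra Q21

/-- The canonical (module) topology on the finite-dimensional real algebra Cl(2,1). -/
instance : TopologicalSpace Cl21 := moduleTopology ℝ Cl21

/-- The orthonormal generators `e₁, e₂, e₃` (indexed here by `0, 1, 2`). -/
def e (i : Fin 3) : Cl21 := ι Q21 (Pi.single i 1)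

/-- The pseudoscalar `I = e₁e₂e₃`. -/
def I3 : Cl21 := e 0 * e 1 * e 2


lemma polar_e (i j : Fin 3) (h : i ≠ j) :
    QuadraticMap.polar (⇑Q21) (Pi.single i 1) (Pi.single j 1) = 0 := by
  fin_cases i <;> fin_cases j <;> simp_all <;>
    simp [QuadraticMap.polar, Q21, QuadraticMap.weightedSumSquares_apply,
      Fin.sum_univ_three, Pi.single_apply]

lemma e_swap (i j : Fin 3) (h : i ≠ j) : e j * e i = -(e i * e j) := by
  have hh := ι_mul_ι_add_swap (Q := Q21) (Pi.single j 1) (Pi.single i 1)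
  rw [polar_e j i (Ne.symm h), map_zero] at hh
  rw [e, e]
  linear_combination (norm := noncomm_ring) hh

lemma e_swap' (i j : Fin 3) (h : i ≠ j) (x : Cl21) :
    e j * (e i * x) = -(e i * (e j * x)) := by
  rw [← mul_assoc, e_swap i j h, ← mul_assoc, neg_mul]

lemma e0_sq : e 0 * e 0 = 1 := by
  rw [e, ι_sq_scalar]
  norm_num [Q21, QuadraticMap.weightedSumSquares_apply, Fin.sum_univ_three, Pi.single_apply]

lemma e1_sq : e 1 * e 1 = 1 := by
  rw [e, ι_sq_scalar]
  norm_num [Q21, QuadraticMap.weightedSumSquares_apply, Fin.sum_univ_three, Pi.single_apply]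

lemma e2_sq : e 2 * e 2 = -1 := by
  rw [e, ι_sq_scalar]
  norm_num [Q21, QuadraticMap.weightedSumSquares_apply, Fin.sum_univ_three, Pi.single_apply]
  simp

lemma e0_sq' (x : Cl21) : e 0 * (e 0 * x) = x := by rw [← mul_assoc, e0_sq, one_mul]
lemma e1_sq' (x : Cl21) : e 1 * (e 1 * x) = x := by rw [← mul_assoc, e1_sq, one_mul]
lemma e2_sq' (x : Cl21) : e 2 * (e 2 * x) = -x := by rw [← mul_assoc, e2_sq, neg_one_mul]

lemma m10 : e 1 * e 0 = -(e 0 * e 1) := e_swap 0 1 (by decide)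
lemma m20 : e 2 * e 0 = -(e 0 * e 2) := e_swap 0 2 (by decide)
lemma m21 : e 2 * e 1 = -(e 1 * e 2) := e_swap 1 2 (by decide)
lemma m10' (x : Cl21) : e 1 * (e 0 * x) = -(e 0 * (e 1 * x)) := e_swap' 0 1 (by decide) x
lemma m20' (x : Cl21) : e 2 * (e 0 * x) = -(e 0 * (e 2 * x)) := e_swap' 0 2 (by decide) x
lemma m21' (x : Cl21) : e 2 * (e 1 * x) = -(e 1 * (e 2 * x)) := e_swap' 1 2 (by decide) x

lemma I3_sq : I3 * I3 = 1 := by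
  simp only [I3, mul_assoc, m10', m20', m21', e0_sq', e1_sq', e2_sq', m10, m20, m21,
    e0_sq, e1_sq, e2_sq, mul_neg, neg_mul, neg_neg, mul_one, one_mul]

lemma I3c0 : e 0 * I3 = I3 * e 0 := by
  simp only [I3, mul_assoc, m10', m20', m21', e0_sq', e1_sq', e2_sq', m10, m20, m21,
    e0_sq, e1_sq, e2_sq, mul_neg, neg_mul, neg_neg, mul_one, one_mul]
lemma I3c1 : e 1 * I3 = I3 * e 1 := by
  simp only [I3, mul_assoc, m10', m20', m21', e0_sq', e1_sq', e2_sq', m10, m20, m21,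
    e0_sq, e1_sq, e2_sq, mul_neg, neg_mul, neg_neg, mul_one, one_mul]
lemma I3c2 : e 2 * I3 = I3 * e 2 := by
  simp only [I3, mul_assoc, m10', m20', m21', e0_sq', e1_sq', e2_sq', m10, m20, m21,
    e0_sq, e1_sq, e2_sq, mul_neg, neg_mul, neg_neg, mul_one, one_mul]


instance : IsModuleTopology ℝ Cl21 := ⟨rfl⟩

instance : T2Space Cl21 := by
  let b := Module.Basis.ofVectorSpace ℝ Cl21
  exact T2Space.of_injective_continuous
    (f := (Finsupp.lcoeFun.comp b.repr.toLinearMap : Cl21 →ₗ[ℝ] _ → ℝ))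
    ((DFunLike.coe_injective).comp b.repr.injective)
    (IsModuleTopology.continuous_of_linearMap _)

lemma N_mul_I3 (a1 a2 a3 a12 a13 a23 : ℝ) :
    (a1 • e 0 + a2 • e 1 + a3 • e 2 +
      (a12 • (e 0 * e 1) + a13 • (e 0 * e 2) + a23 • (e 1 * e 2))) * I3 =
    I3 * (a1 • e 0 + a2 • e 1 + a3 • e 2 +
      (a12 • (e 0 * e 1) + a13 • (e 0 * e 2) + a23 • (e 1 * e 2))) := by
  simp only [I3, mul_add, add_mul, smul_mul_assoc, mul_smul_comm, mul_assoc,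
    m10', m20', m21', e0_sq', e1_sq', e2_sq', m10, m20, m21, e0_sq, e1_sq, e2_sq,
    mul_neg, neg_mul, smul_neg, neg_neg, mul_one, one_mul]

lemma N_sq (a1 a2 a3 a12 a13 a23 : ℝ) :
    (a1 • e 0 + a2 • e 1 + a3 • e 2 +
      (a12 • (e 0 * e 1) + a13 • (e 0 * e 2) + a23 • (e 1 * e 2))) *
    (a1 • e 0 + a2 • e 1 + a3 • e 2 +
      (a12 • (e 0 * e 1) + a13 • (e 0 * e 2) + a23 • (e 1 * e 2))) =
    (a1^2 + a2^2 - a3^2 - a12^2 + a13^2 + a23^2) • (1 : Cl21) +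
    (2*(a1*a23 - a2*a13 + a3*a12)) • I3 := by
  simp only [I3, mul_add, add_mul, smul_mul_assoc, mul_smul_comm, mul_assoc,
    m10', m20', m21', e0_sq', e1_sq', e2_sq', m10, m20, m21, e0_sq, e1_sq, e2_sq,
    mul_neg, neg_mul, smul_neg, neg_neg, mul_one, one_mul]
  module

/-- The exponential `exp M = ∑ₖ Mᵏ/k!` in Cl(2,1). -/
def expCl (M : Cl21) : Cl21 := ∑' n : ℕ, (n.factorial : ℝ)⁻¹ • M ^ n

/-- `atan2 y x` is the argument in `(-π, π]` of the complex number `x + iy`. -/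
def atan2 (y x : ℝ) : ℝ := Complex.arg ⟨x, y⟩

/-- the generic (`a₊⁽²⁾ > 0`, `a₋⁽²⁾ > 0`) logarithm formula in Cl(2,1)
exponentiates back to `A`. -/
theorem exp_genericLog_Cl21
    (a0 a1 a2 a3 a12 a13 a23 a123 s w a2p a2m ap am fp fm : ℝ) (c1p c1m : ℤ)
    (va bA A A0p A0m A12p A12m L : Cl21)
    (hva : va = a1 • e 0 + a2 • e 1 + a3 • e 2)
    (hbA : bA = a12 • (e 0 * e 1) + a13 • (e 0 * e 2) + a23 • (e 1 * e 2))
    (hA : A = algebraMap ℝ Cl21 a0 + va + bA + a123 • I3)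
    (hs : s = a1 ^ 2 + a2 ^ 2 - a3 ^ 2 - a12 ^ 2 + a13 ^ 2 + a23 ^ 2)
    (hw : w = a1 * a23 - a2 * a13 + a3 * a12)
    (ha2p : a2p = -s - 2 * w) (ha2m : a2m = -s + 2 * w)
    (ha2ppos : 0 < a2p) (ha2mpos : 0 < a2m)
    (hap : ap = Real.sqrt a2p) (ham : am = Real.sqrt a2m)
    (hfp : fp = (a0 + a123) ^ 2 + a2p) (hfm : fm = (a0 - a123) ^ 2 + a2m)
    (hA0p : A0p = algebraMap ℝ Cl21 ((1 / 2) * Real.log fp))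
    (hA0m : A0m = algebraMap ℝ Cl21 ((1 / 2) * Real.log fm))
    (hA12p : A12p = ((atan2 ap (a0 + a123) + 2 * π * c1p) / ap) • ((1 + I3) * (va + bA)))
    (hA12m : A12m = ((atan2 am (a0 - a123) + 2 * π * c1m) / am) • ((1 - I3) * (va + bA)))
    (hL : L = (1 / 2 : ℝ) • (A0p + A0m + A12p + A12m + (A0p - A0m) * I3)) :
    expCl L = A := by
  haveI := IsModuleTopology.toContinuousAdd ℝ Cl21
  have hap0 : 0 < ap := hap ▸ Real.sqrt_pos.2 ha2ppos
  have ham0 : 0 < am := ham ▸ Real.sqrt_pos.2 ha2mpos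
  have hap2 : ap ^ 2 = a2p := by rw [hap, sq_sqrt ha2ppos.le]
  have ham2 : am ^ 2 = a2m := by rw [ham, sq_sqrt ha2mpos.le]
  have hfp0 : 0 < fp := by nlinarith [sq_nonneg (a0 + a123)]
  have hfm0 : 0 < fm := by nlinarith [sq_nonneg (a0 - a123)]
  set θp : ℝ := atan2 ap (a0 + a123) + 2 * π * c1p with hθp
  set θm : ℝ := atan2 am (a0 - a123) + 2 * π * c1m with hθm
  set xp : ℝ := (1 / 2) * Real.log fp with hxp
  set xm : ℝ := (1 / 2) * Real.log fm with hxm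
  set zp : ℂ := ⟨xp, θp⟩ with hzp
  set zm : ℂ := ⟨xm, θm⟩ with hzm
  set N : Cl21 := va + bA with hN
  set P : Cl21 := (1/2 : ℝ) • (1 + I3) with hP
  set Qm : Cl21 := (1/2 : ℝ) • (1 - I3) with hQm
  have hNI : N * I3 = I3 * N := by rw [hN, hva, hbA]; exact N_mul_I3 _ _ _ _ _ _
  have hNN : N * N = s • (1 : Cl21) + (2*w) • I3 := by
    rw [hN, hva, hbA, N_sq, hs, hw]
  have hPP : P * P = P := by
    rw [hP]
    simp only [smul_mul_assoc, mul_smul_comm, mul_add, add_mul, one_mul, mul_one, I3_sq]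
    module
  have hQQ : Qm * Qm = Qm := by
    rw [hQm]
    simp only [smul_mul_assoc, mul_smul_comm, mul_add, add_mul, sub_mul, mul_sub,
      one_mul, mul_one, I3_sq]
    module
  have hPQ : P * Qm = 0 := by
    rw [hP, hQm]
    simp only [smul_mul_assoc, mul_smul_comm, mul_add, add_mul, sub_mul, mul_sub,
      one_mul, mul_one, I3_sq]
    module
  have hQP : Qm * P = 0 := by
    rw [hP, hQm]
    simp only [smul_mul_assoc, mul_smul_comm, mul_add, add_mul, sub_mul, mul_sub,
      one_mul, mul_one, I3_sq]
    module
  have hPQ1 : P + Qm = 1 := by rw [hP, hQm]; module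
  have hIP : I3 * P = P := by
    rw [hP]
    simp only [mul_smul_comm, mul_add, mul_one, I3_sq]
    module
  have hIQ : I3 * Qm = -Qm := by
    rw [hQm]
    simp only [mul_smul_comm, mul_sub, mul_one, I3_sq]
    module
  have hNP : N * P = P * N := by
    rw [hP]
    simp only [mul_smul_comm, smul_mul_assoc, mul_add, add_mul, mul_one, one_mul, hNI]
  have hNQ : N * Qm = Qm * N := by
    rw [hQm]
    simp only [mul_smul_comm, smul_mul_assoc, mul_sub, sub_mul, mul_one, one_mul, hNI]
  have hNPNP : (N * P) * (N * P) = (-a2p) • P := by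
    rw [mul_assoc N P (N*P), ← mul_assoc P N P, ← hNP, mul_assoc N P P, hPP, ← mul_assoc,
      hNN]
    simp only [add_mul, smul_mul_assoc, one_mul, hIP]
    have h1 : s + 2*w = -a2p := by linarith
    rw [← add_smul, h1]
  have hNQNQ : (N * Qm) * (N * Qm) = (-a2m) • Qm := by
    rw [mul_assoc N Qm (N*Qm), ← mul_assoc Qm N Qm, ← hNQ, mul_assoc N Qm Qm, hQQ,
      ← mul_assoc, hNN]
    simp only [add_mul, smul_mul_assoc, one_mul, hIQ, smul_neg]
    have h1 : -a2m = s - 2*w := by linarith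
    rw [h1]
    module
  set Jp : Cl21 := ap⁻¹ • (N * P) with hJp
  set Jm : Cl21 := am⁻¹ • (N * Qm) with hJm
  have hJpJp : Jp * Jp = -P := by
    rw [hJp, smul_mul_assoc, mul_smul_comm, hNPNP, smul_smul, smul_smul]
    have h2 : ap⁻¹ * ap⁻¹ * -a2p = -1 := by
      rw [← hap2, pow_two]
      field_simp
    rw [h2, neg_one_smul]
  have hJmJm : Jm * Jm = -Qm := by
    rw [hJm, smul_mul_assoc, mul_smul_comm, hNQNQ, smul_smul, smul_smul]
    have h2 : am⁻¹ * am⁻¹ * -a2m = -1 := by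
      rw [← ham2, pow_two]
      field_simp
    rw [h2, neg_one_smul]
  have hPJp : P * Jp = Jp := by
    rw [hJp, mul_smul_comm, ← mul_assoc, ← hNP, mul_assoc, hPP]
  have hJpP : Jp * P = Jp := by rw [hJp, smul_mul_assoc, mul_assoc, hPP]
  have hQJm : Qm * Jm = Jm := by
    rw [hJm, mul_smul_comm, ← mul_assoc, ← hNQ, mul_assoc, hQQ]
  have hJmQ : Jm * Qm = Jm := by rw [hJm, smul_mul_assoc, mul_assoc, hQQ]
  have hPJm : P * Jm = 0 := by
    rw [hJm, mul_smul_comm, ← mul_assoc, ← hNP, mul_assoc, hPQ, mul_zero, smul_zero]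
  have hJmP : Jm * P = 0 := by
    rw [hJm, smul_mul_assoc, mul_assoc, hQP, mul_zero, smul_zero]
  have hQJp : Qm * Jp = 0 := by
    rw [hJp, mul_smul_comm, ← mul_assoc, ← hNQ, mul_assoc, hQP, mul_zero, smul_zero]
  have hJpQ : Jp * Qm = 0 := by
    rw [hJp, smul_mul_assoc, mul_assoc, hPQ, mul_zero, smul_zero]
  have hJpJm : Jp * Jm = 0 := by
    rw [hJp, hJm, smul_mul_assoc, mul_smul_comm, mul_assoc N P (N * Qm),
      ← mul_assoc P N Qm, ← hNP, mul_assoc N P Qm, hPQ, mul_zero, mul_zero,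
      smul_zero, smul_zero]
  have hJmJp : Jm * Jp = 0 := by
    rw [hJp, hJm, smul_mul_assoc, mul_smul_comm, mul_assoc N Qm (N * P),
      ← mul_assoc Qm N P, ← hNQ, mul_assoc N Qm P, hQP, mul_zero, mul_zero,
      smul_zero, smul_zero]
  set φ : ℂ × ℂ → Cl21 :=
    fun u => u.1.re • P + u.1.im • Jp + u.2.re • Qm + u.2.im • Jm with hφ
  have hadd : ∀ u v : ℂ × ℂ, φ (u + v) = φ u + φ v := by
    intro u v
    simp only [hφ, Prod.fst_add, Prod.snd_add, Complex.add_re, Complex.add_im]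
    module
  have hφs : ∀ (r : ℝ) (u : ℂ × ℂ), φ (r • u) = r • φ u := by
    intro r u
    simp only [hφ, Prod.smul_fst, Prod.smul_snd, Complex.smul_re, Complex.smul_im,
      smul_eq_mul]
    module
  have hφm : ∀ u v : ℂ × ℂ, φ u * φ v = φ (u * v) := by
    intro u v
    simp only [hφ, Prod.fst_mul, Prod.snd_mul, Complex.mul_re, Complex.mul_im]
    simp only [add_mul, mul_add, smul_mul_assoc, mul_smul_comm, smul_smul,
      hPP, hPQ, hQP, hQQ, hPJp, hJpP, hJpJp, hQJm, hJmQ, hJmJm, hPJm, hJmP, hQJp, hJpQ,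
      hJpJm, hJmJp, smul_zero, add_zero, zero_add, smul_neg]
    module
  have hφ1 : φ (1, 1) = 1 := by
    rw [← hPQ1]
    simp only [hφ, Prod.fst_one, Prod.snd_one, Complex.one_re, Complex.one_im,
      one_smul, zero_smul, add_zero]
  have hLφ : L = φ (zp, zm) := by
    show L = zp.re • P + zp.im • Jp + zm.re • Qm + zm.im • Jm
    rw [hL, hA0p, hA0m, hA12p, hA12m, hJp, hJm, hP, hQm]
    show _ = xp • _ + θp • _ + xm • _ + θm • _
    simp only [Algebra.algebraMap_eq_smul_one, add_mul, sub_mul, smul_mul_assoc, one_mul,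
      mul_add, mul_sub, mul_one, mul_smul_comm, ← hNI, div_eq_mul_inv]
    module
  have hpow : ∀ n : ℕ, L ^ n = φ (zp ^ n, zm ^ n) := by
    intro n
    induction n with
    | zero => simpa using hφ1.symm
    | succ n ih =>
      rw [pow_succ, ih, hLφ, hφm, pow_succ zp, pow_succ zm]
      rfl
  have hφc : Continuous φ := by
    rw [hφ]
    exact (((((Complex.continuous_re.comp continuous_fst).smul (continuous_const (y := P))).add
      ((Complex.continuous_im.comp continuous_fst).smul continuous_const)).add
      ((Complex.continuous_re.comp continuous_snd).smul continuous_const)).add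
      ((Complex.continuous_im.comp continuous_snd).smul continuous_const))
  have hsC : HasSum
      (fun n : ℕ => ((n.factorial : ℝ)⁻¹ • zp ^ n, (n.factorial : ℝ)⁻¹ • zm ^ n))
      (NormedSpace.exp zp, NormedSpace.exp zm) :=
    (NormedSpace.exp_series_hasSum_exp' (𝕂 := ℝ) zp).prodMk (NormedSpace.exp_series_hasSum_exp' (𝕂 := ℝ) zm)
  have hmap := hsC.map (AddMonoidHom.mk' φ hadd) hφc
  have hfun : ((AddMonoidHom.mk' φ hadd) ∘
      fun n : ℕ => ((n.factorial : ℝ)⁻¹ • zp ^ n, (n.factorial : ℝ)⁻¹ • zm ^ n))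
      = fun n : ℕ => (n.factorial : ℝ)⁻¹ • L ^ n := by
    funext n
    show φ ((n.factorial : ℝ)⁻¹ • (zp ^ n, zm ^ n)) = (n.factorial : ℝ)⁻¹ • L ^ n
    rw [hφs, hpow n]
  rw [hfun] at hmap
  rw [expCl, hmap.tsum_eq]
  show φ (NormedSpace.exp zp, NormedSpace.exp zm) = A
  have hexp : ∀ z : ℂ, NormedSpace.exp z = Complex.exp z := fun z => by
    rw [Complex.exp_eq_exp_ℂ]
  have hbne : (⟨a0 + a123, ap⟩ : ℂ) ≠ 0 := by
    intro h
    have := congrArg Complex.im h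
    simp only [Complex.zero_im] at this
    exact hap0.ne' this
  have hcne : (⟨a0 - a123, am⟩ : ℂ) ≠ 0 := by
    intro h
    have := congrArg Complex.im h
    simp only [Complex.zero_im] at this
    exact ham0.ne' this
  have habsp : ‖(⟨a0 + a123, ap⟩ : ℂ)‖ = Real.sqrt fp := by
    have h1 : Complex.normSq ⟨a0 + a123, ap⟩ = fp := by
      rw [Complex.normSq_mk, hfp, ← hap2]; ring
    rw [Complex.norm_def, h1]
  have habsm : ‖(⟨a0 - a123, am⟩ : ℂ)‖ = Real.sqrt fm := by
    have h1 : Complex.normSq ⟨a0 - a123, am⟩ = fm := by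
      rw [Complex.normSq_mk, hfm, ← ham2]; ring
    rw [Complex.norm_def, h1]
  have hsfp : (0:ℝ) < Real.sqrt fp := Real.sqrt_pos.2 hfp0
  have hsfm : (0:ℝ) < Real.sqrt fm := Real.sqrt_pos.2 hfm0
  have hcosp : Real.cos θp = (a0 + a123) / Real.sqrt fp := by
    rw [hθp, show atan2 ap (a0+a123) + 2*π*(c1p:ℝ) = atan2 ap (a0+a123) + (c1p:ℝ) * (2*π)
      by ring, Real.cos_add_int_mul_two_pi, atan2, Complex.cos_arg hbne, habsp]
  have hsinp : Real.sin θp = ap / Real.sqrt fp := by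
    rw [hθp, show atan2 ap (a0+a123) + 2*π*(c1p:ℝ) = atan2 ap (a0+a123) + (c1p:ℝ) * (2*π)
      by ring, Real.sin_add_int_mul_two_pi, atan2, Complex.sin_arg, habsp]
  have hcosm : Real.cos θm = (a0 - a123) / Real.sqrt fm := by
    rw [hθm, show atan2 am (a0-a123) + 2*π*(c1m:ℝ) = atan2 am (a0-a123) + (c1m:ℝ) * (2*π)
      by ring, Real.cos_add_int_mul_two_pi, atan2, Complex.cos_arg hcne, habsm]
  have hsinm : Real.sin θm = am / Real.sqrt fm := by
    rw [hθm, show atan2 am (a0-a123) + 2*π*(c1m:ℝ) = atan2 am (a0-a123) + (c1m:ℝ) * (2*π)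
      by ring, Real.sin_add_int_mul_two_pi, atan2, Complex.sin_arg, habsm]
  have hexpxp : Real.exp xp = Real.sqrt fp := by
    rw [hxp, Real.sqrt_eq_rpow, Real.rpow_def_of_pos hfp0]
    ring_nf
  have hexpxm : Real.exp xm = Real.sqrt fm := by
    rw [hxm, Real.sqrt_eq_rpow, Real.rpow_def_of_pos hfm0]
    ring_nf
  have hrep : (Complex.exp zp).re = a0 + a123 := by
    rw [Complex.exp_re]
    show Real.exp xp * Real.cos θp = _
    rw [hexpxp, hcosp]
    field_simp
  have himp : (Complex.exp zp).im = ap := by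
    rw [Complex.exp_im]
    show Real.exp xp * Real.sin θp = _
    rw [hexpxp, hsinp]
    field_simp
  have hrem : (Complex.exp zm).re = a0 - a123 := by
    rw [Complex.exp_re]
    show Real.exp xm * Real.cos θm = _
    rw [hexpxm, hcosm]
    field_simp
  have himm : (Complex.exp zm).im = am := by
    rw [Complex.exp_im]
    show Real.exp xm * Real.sin θm = _
    rw [hexpxm, hsinm]
    field_simp
  rw [hexp, hexp]
  simp only [hφ]
  rw [hrep, himp, hrem, himm, hJp, hJm, smul_inv_smul₀ hap0.ne',
    smul_inv_smul₀ ham0.ne', hA, hN, hP, hQm, Algebra.algebraMap_eq_smul_one]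
  simp only [mul_smul_comm, mul_add, mul_sub, mul_one, add_mul]
  module
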